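/- Let 0 < p < 1/2, λ ∈ ℝ, and fix (x₀,y₀,z₀) ∈ H. Then the Riemann function V satisfies on the face y = y₀ the characteristic condition ∂²V/∂x∂z (x,y₀,z) − (p/(x−y₀−z)²) V(x,y₀,z) − (p/(x−y₀−z)) ∂V/∂z (x,y₀,z) = 0 for all (x,z) with z₀ ≤ z and y₀ + z < x ≤ x₀. -/

import Mathlib

open Real MeasureTheory Filter Topology

noncomputable section

/-- Pochhammer symbol `(a)_n = a (a+1) ⋯ (a+n-1)`. -/
def poch (a : ℝ) (n : ℕ) : ℝ := ∏ i ∈ Finset.range n, (a + i)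

/-- The Gauss hypergeometric series `F(a,b;c;z) = ∑ (a)_n (b)_n zⁿ / ((c)_n n!)`. -/
def gaussF (a b c z : ℝ) : ℝ :=
  ∑' n : ℕ, poch a n * poch b n / (poch c n * n.factorial) * z ^ n

/-- The region `H = {(x,y,z) : 0 < z < x − y, 0 < y < x}`. -/
def regH : Set (ℝ × ℝ × ℝ) :=
  {w | 0 < w.2.2 ∧ w.2.2 < w.1 - w.2.1 ∧ 0 < w.2.1 ∧ w.2.1 < w.1}

/-- The Riemann function (5) for the equation (1), with pole `(x₀, y₀, z₀)`
(the variable `z₀` does not enter the formula). -/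
def riemannV (p lam x₀ y₀ : ℝ) (x y z : ℝ) : ℝ :=
  (x - y - z) ^ (2 * p) * (x - y₀ - z) ^ (-p) * (x₀ - y - z) ^ (-p) *
    ∑' m : ℕ, (lam * (x₀ - x) * (y₀ - y)) ^ m / (poch 1 m * m.factorial) *
      gaussF p (p + m) (1 + m) ((x - x₀) * (y₀ - y) / ((x - y₀ - z) * (x₀ - y - z)))

/-! On the face `y = y₀` both series collapse to their constant term, so `V` is the product of
powers `a ^ p * b ^ (-p)` with `a = x − y₀ − z`, `b = x₀ − y₀ − z`. For any product
`W = a ^ p * b ^ q` with `∂ₓa = 1`, `∂_z a = ∂_z b = −1` and `∂ₓb = 0`, the terms of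
`W_xz − (p / a²) W − (p / a) W_z` cancel pairwise, whatever the exponent `q`. -/

lemma gaussF_zero (a b c : ℝ) : gaussF a b c 0 = 1 := by
  rw [gaussF, tsum_eq_single 0 fun n hn => by simp [zero_pow hn]]
  simp [poch]

lemma riemannV_face {p lam x₀ y₀ t u : ℝ} (h : 0 < t - y₀ - u) :
    riemannV p lam x₀ y₀ t y₀ u = (t - y₀ - u) ^ p * (x₀ - y₀ - u) ^ (-p) := by
  have hseries : ∑' m : ℕ, (lam * (x₀ - t) * (y₀ - y₀)) ^ m / (poch 1 m * m.factorial) *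
      gaussF p (p + m) (1 + m) ((t - x₀) * (y₀ - y₀) / ((t - y₀ - u) * (x₀ - y₀ - u))) = 1 := by
    rw [tsum_eq_single 0 fun n hn => by simp [zero_pow hn]]
    simp [poch, gaussF_zero]
  rw [riemannV, hseries, mul_one, ← rpow_add h]
  ring_nf

section PowerProduct

variable {p q α β x z : ℝ}

lemma hasDerivAt_sub_rpow_mul_left {u : ℝ} (hu : x - α - u ≠ 0) :
    HasDerivAt (fun t => (t - α - u) ^ p * (β - u) ^ q)
      (p * (x - α - u) ^ (p - 1) * (β - u) ^ q) x := by
  have h := (((hasDerivAt_id' x).sub_const α).sub_const u).rpow_const (p := p) (Or.inl hu)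
  simpa using h.mul_const ((β - u) ^ q)

lemma hasDerivAt_sub_rpow_mul_right (r : ℝ) (ha : x - α - z ≠ 0) (hb : β - z ≠ 0) :
    HasDerivAt (fun u => (x - α - u) ^ r * (β - u) ^ q)
      (-(r * (x - α - z) ^ (r - 1) * (β - z) ^ q) - q * (x - α - z) ^ r * (β - z) ^ (q - 1))
      z := by
  have ha' := ((hasDerivAt_id' z).const_sub (x - α)).rpow_const (p := r) (Or.inl ha)
  have hb' := ((hasDerivAt_id' z).const_sub β).rpow_const (p := q) (Or.inl hb)
  exact (ha'.mul hb').congr_deriv (by ring)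

theorem char_condition_of_eq_rpow_mul (V : ℝ → ℝ → ℝ)
    (hV : ∀ t u, 0 < t - α - u → V t u = (t - α - u) ^ p * (β - u) ^ q)
    (ha : 0 < x - α - z) (hb : β - z ≠ 0) :
    deriv (fun u => deriv (fun t => V t u) x) z - p / (x - α - z) ^ 2 * V x z
      - p / (x - α - z) * deriv (fun u => V x u) z = 0 := by
  have hnear : ∀ᶠ u in 𝓝 z, 0 < x - α - u :=
    (by fun_prop : Continuous fun u => x - α - u).continuousAt.eventually (eventually_gt_nhds ha)
  have hVx : ∀ u, 0 < x - α - u →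
      deriv (fun t => V t u) x = p * ((x - α - u) ^ (p - 1) * (β - u) ^ q) := by
    intro u hu
    have hloc : (fun t => V t u) =ᶠ[𝓝 x] fun t => (t - α - u) ^ p * (β - u) ^ q := by
      filter_upwards [(by fun_prop : Continuous fun t => t - α - u).continuousAt.eventually
        (eventually_gt_nhds hu)] with t ht using hV t u ht
    rw [hloc.deriv_eq, (hasDerivAt_sub_rpow_mul_left hu.ne').deriv, mul_assoc]
  have hVxz : deriv (fun u => deriv (fun t => V t u) x) z =
      p * (-((p - 1) * (x - α - z) ^ (p - 1 - 1) * (β - z) ^ q)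
        - q * (x - α - z) ^ (p - 1) * (β - z) ^ (q - 1)) := by
    have hloc : (fun u => deriv (fun t => V t u) x) =ᶠ[𝓝 z]
        fun u => p * ((x - α - u) ^ (p - 1) * (β - u) ^ q) := hnear.mono hVx
    rw [hloc.deriv_eq, ((hasDerivAt_sub_rpow_mul_right (p - 1) ha.ne' hb).const_mul p).deriv]
  have hVz : deriv (fun u => V x u) z =
      -(p * (x - α - z) ^ (p - 1) * (β - z) ^ q) - q * (x - α - z) ^ p * (β - z) ^ (q - 1) := by
    have hloc : (fun u => V x u) =ᶠ[𝓝 z] fun u => (x - α - u) ^ p * (β - u) ^ q :=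
      hnear.mono (hV x)
    rw [hloc.deriv_eq, (hasDerivAt_sub_rpow_mul_right p ha.ne' hb).deriv]
  rw [hVxz, hVz, hV x z ha, rpow_sub_one ha.ne' (p - 1), rpow_sub_one ha.ne' p,
    rpow_sub_one hb q]
  field_simp
  ring

end PowerProduct

theorem riemann_char_y_general (p lam : ℝ)
    (x₀ y₀ z₀ : ℝ) :
    ∀ x z : ℝ, z₀ ≤ z → y₀ + z < x → x ≤ x₀ →
      deriv (fun u => deriv (fun t => riemannV p lam x₀ y₀ t y₀ u) x) z
        - p / (x - y₀ - z) ^ 2 * riemannV p lam x₀ y₀ x y₀ z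
        - p / (x - y₀ - z) * deriv (fun u => riemannV p lam x₀ y₀ x y₀ u) z = 0 := by
  intro x z _ hxz hx
  exact char_condition_of_eq_rpow_mul (fun t u => riemannV p lam x₀ y₀ t y₀ u)
    (fun t u h => riemannV_face h) (by linarith) (by linarith : (0 : ℝ) < x₀ - y₀ - z).ne'

/-- On the characteristic face `y = y₀`, the Riemann function satisfies
`V_xz − (p/(x−y₀−z)²) V − (p/(x−y₀−z)) V_z = 0`. -/
theorem riemann_char_y (p lam : ℝ) (hp0 : 0 < p) (hp : p < 1 / 2)
    (x₀ y₀ z₀ : ℝ) (h₀ : (x₀, y₀, z₀) ∈ regH) :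
    ∀ x z : ℝ, z₀ ≤ z → y₀ + z < x → x ≤ x₀ →
      deriv (fun u => deriv (fun t => riemannV p lam x₀ y₀ t y₀ u) x) z
        - p / (x - y₀ - z) ^ 2 * riemannV p lam x₀ y₀ x y₀ z
        - p / (x - y₀ - z) * deriv (fun u => riemannV p lam x₀ y₀ x y₀ u) z = 0 :=
  riemann_char_y_general p lam x₀ y₀ z₀
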